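/- Define Ω(x₁,x₂) = (x₁f(x₁) − x₂f(x₂))(Q(x₁)+Φ(x₂)) + (Q(x₁)+Φ(x₂))² − (f(x₁)−f(x₂))², where f is the standard normal density, Q its tail function, and Φ its cdf. Then Ω(x₁,x₂) > 0 for all real x₁, x₂. -/

import Mathlib

/-!
Write `a = Q x₁`, `b = Φ x₂`, `p = f x₁`, `q = f x₂`, `u = a + x₁ p` and `v = b - x₂ q`. Then
`Ω = (a + b) (u + v) - p² - q² + 2 p q`, so the one-variable inequalities `u ≥ 0`, `p² ≤ a u`
and their mirror images `v ≥ 0`, `q² ≤ b v` (from `Φ x = Q (-x)`) give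
`Ω ≥ a v + b u + 2 p q > 0`.

Each one-variable inequality says that some function of `x` tending to `0` at `+∞` is
nonnegative, which follows from a nonpositive derivative. For `p² ≤ a u` that derivative is
`-f x ((1 + x²) Q x - x f x)`, and the sign of the second factor is again read off its
derivative `2 (x Q x - f x)`, which is nonpositive by the Mills inequality `x Q x ≤ f x`.
-/

open Real MeasureTheory Set

noncomputable def stdNormalPdf (x : ℝ) : ℝ := (Real.sqrt (2 * Real.pi))⁻¹ * Real.exp (-x ^ 2 / 2)

noncomputable def gaussQ (x : ℝ) : ℝ := ∫ t in Set.Ici x, stdNormalPdf t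

noncomputable def gaussPhi (x : ℝ) : ℝ := ∫ t in Set.Iic x, stdNormalPdf t

open Filter Topology

lemma stdNormalPdf_pos (x : ℝ) : 0 < stdNormalPdf x := by
  unfold stdNormalPdf; positivity

lemma stdNormalPdf_neg (x : ℝ) : stdNormalPdf (-x) = stdNormalPdf x := by
  simp [stdNormalPdf]

lemma continuous_stdNormalPdf : Continuous stdNormalPdf := by
  unfold stdNormalPdf; fun_prop

lemma hasDerivAt_stdNormalPdf (x : ℝ) : HasDerivAt stdNormalPdf (-x * stdNormalPdf x) x := by
  have h : HasDerivAt (fun y : ℝ => -y ^ 2 / 2) (-x) x :=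
    (((hasDerivAt_pow 2 x).neg).div_const 2).congr_deriv (by ring)
  exact (h.exp.const_mul (√(2 * π))⁻¹).congr_deriv (by unfold stdNormalPdf; ring)

lemma hasDerivAt_mul_stdNormalPdf (x : ℝ) :
    HasDerivAt (fun y => y * stdNormalPdf y) ((1 - x ^ 2) * stdNormalPdf x) x :=
  ((hasDerivAt_id x).mul (hasDerivAt_stdNormalPdf x)).congr_deriv (by simp only [id]; ring)

lemma integrable_stdNormalPdf : Integrable stdNormalPdf := by
  refine ((integrable_exp_neg_mul_sq (by norm_num : (0 : ℝ) < 1 / 2)).const_mul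
    (√(2 * π))⁻¹).congr (Eventually.of_forall fun x => ?_)
  simp only [stdNormalPdf]; ring_nf

lemma tendsto_abs_rpow_mul_stdNormalPdf_cocompact (s : ℝ) :
    Tendsto (fun x => |x| ^ s * stdNormalPdf x) (cocompact ℝ) (𝓝 0) := by
  have h := (tendsto_rpow_abs_mul_exp_neg_mul_sq_cocompact (by norm_num : (0 : ℝ) < 1 / 2)
    s).const_mul (√(2 * π))⁻¹
  rw [mul_zero] at h
  refine h.congr fun x => ?_
  simp only [stdNormalPdf]; ring_nf

lemma tendsto_stdNormalPdf_atTop : Tendsto stdNormalPdf atTop (𝓝 0) := by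
  simpa using (tendsto_abs_rpow_mul_stdNormalPdf_cocompact 0).mono_left atTop_le_cocompact

lemma tendsto_mul_stdNormalPdf_atTop : Tendsto (fun x => x * stdNormalPdf x) atTop (𝓝 0) := by
  refine ((tendsto_abs_rpow_mul_stdNormalPdf_cocompact 1).mono_left atTop_le_cocompact).congr' ?_
  filter_upwards [eventually_ge_atTop 0] with x hx
  rw [rpow_one, abs_of_nonneg hx]

lemma gaussQ_nonneg (x : ℝ) : 0 ≤ gaussQ x :=
  setIntegral_nonneg measurableSet_Ici fun t _ => (stdNormalPdf_pos t).le

lemma gaussQ_neg (x : ℝ) : gaussQ (-x) = gaussPhi x := by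
  rw [gaussQ, integral_Ici_eq_integral_Ioi, gaussPhi, ← neg_neg x, ← integral_comp_neg_Ioi]
  simp [stdNormalPdf_neg]

lemma gaussPhi_nonneg (x : ℝ) : 0 ≤ gaussPhi x :=
  gaussQ_neg x ▸ gaussQ_nonneg (-x)

lemma gaussPhi_add_gaussQ (x : ℝ) : gaussPhi x + gaussQ x = ∫ t, stdNormalPdf t := by
  rw [gaussQ, gaussPhi, integral_Ici_eq_integral_Ioi]
  exact intervalIntegral.integral_Iic_add_Ioi integrable_stdNormalPdf.integrableOn
    integrable_stdNormalPdf.integrableOn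

lemma hasDerivAt_gaussPhi (x : ℝ) : HasDerivAt gaussPhi (stdNormalPdf x) x := by
  have hPhi : gaussPhi = fun y => gaussPhi 0 + ∫ t in (0 : ℝ)..y, stdNormalPdf t := by
    funext y
    rw [gaussPhi, gaussPhi, ← intervalIntegral.integral_Iic_sub_Iic
      integrable_stdNormalPdf.integrableOn integrable_stdNormalPdf.integrableOn]
    ring
  rw [hPhi]
  exact (intervalIntegral.integral_hasDerivAt_right integrable_stdNormalPdf.intervalIntegrable
    (continuous_stdNormalPdf.stronglyMeasurableAtFilter _ _)
    continuous_stdNormalPdf.continuousAt).const_add _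

lemma hasDerivAt_gaussQ (x : ℝ) : HasDerivAt gaussQ (-stdNormalPdf x) x := by
  have hQ : gaussQ = fun y => (∫ t, stdNormalPdf t) - gaussPhi y := by
    funext y; rw [← gaussPhi_add_gaussQ y]; ring
  rw [hQ]
  exact (hasDerivAt_gaussPhi x).const_sub _

lemma hasDerivAt_neg_stdNormalPdf (x : ℝ) :
    HasDerivAt (fun y => -stdNormalPdf y) (x * stdNormalPdf x) x :=
  (hasDerivAt_stdNormalPdf x).neg.congr_deriv (by ring)

lemma tendsto_neg_stdNormalPdf_atTop : Tendsto (fun x => -stdNormalPdf x) atTop (𝓝 0) := by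
  simpa using tendsto_stdNormalPdf_atTop.neg

lemma integrableOn_Ioi_mul_stdNormalPdf {a : ℝ} (ha : 0 ≤ a) :
    IntegrableOn (fun t => t * stdNormalPdf t) (Ioi a) :=
  integrableOn_Ioi_deriv_of_nonneg' (fun t _ => hasDerivAt_neg_stdNormalPdf t)
    (fun t ht => mul_nonneg (ha.trans ht.out.le) (stdNormalPdf_pos t).le)
    tendsto_neg_stdNormalPdf_atTop

lemma integral_Ioi_mul_stdNormalPdf {a : ℝ} (ha : 0 ≤ a) :
    ∫ t in Ioi a, t * stdNormalPdf t = stdNormalPdf a := by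
  rw [integral_Ioi_of_hasDerivAt_of_nonneg' (fun t _ => hasDerivAt_neg_stdNormalPdf t)
    (fun t ht => mul_nonneg (ha.trans ht.out.le) (stdNormalPdf_pos t).le)
    tendsto_neg_stdNormalPdf_atTop]
  ring

lemma mul_gaussQ_le_stdNormalPdf (x : ℝ) : x * gaussQ x ≤ stdNormalPdf x := by
  rcases le_or_gt x 0 with hx | hx
  · exact (mul_nonpos_of_nonpos_of_nonneg hx (gaussQ_nonneg x)).trans (stdNormalPdf_pos x).le
  rw [gaussQ, integral_Ici_eq_integral_Ioi, ← integral_const_mul,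
    ← integral_Ioi_mul_stdNormalPdf hx.le]
  exact setIntegral_mono_on (integrable_stdNormalPdf.integrableOn.const_mul x)
    (integrableOn_Ioi_mul_stdNormalPdf hx.le)
    measurableSet_Ioi fun t ht => mul_le_mul_of_nonneg_right ht.out.le (stdNormalPdf_pos t).le

lemma tendsto_gaussQ_atTop : Tendsto gaussQ atTop (𝓝 0) := by
  refine squeeze_zero' (Eventually.of_forall gaussQ_nonneg) ?_ tendsto_stdNormalPdf_atTop
  filter_upwards [eventually_ge_atTop 1] with x hx
  nlinarith [mul_gaussQ_le_stdNormalPdf x, gaussQ_nonneg x]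

lemma tendsto_sq_mul_gaussQ_atTop : Tendsto (fun x => x ^ 2 * gaussQ x) atTop (𝓝 0) := by
  refine squeeze_zero' (Eventually.of_forall fun x => mul_nonneg (sq_nonneg x) (gaussQ_nonneg x))
    ?_ tendsto_mul_stdNormalPdf_atTop
  filter_upwards [eventually_ge_atTop 0] with x hx
  nlinarith [mul_gaussQ_le_stdNormalPdf x]

lemma hasDerivAt_gaussQ_add_mul_stdNormalPdf (x : ℝ) :
    HasDerivAt (fun y => gaussQ y + y * stdNormalPdf y) (-(x ^ 2 * stdNormalPdf x)) x :=
  ((hasDerivAt_gaussQ x).add (hasDerivAt_mul_stdNormalPdf x)).congr_deriv (by ring)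

lemma gaussQ_add_mul_stdNormalPdf_nonneg (x : ℝ) : 0 ≤ gaussQ x + x * stdNormalPdf x := by
  have hlim : Tendsto (fun y => gaussQ y + y * stdNormalPdf y) atTop (𝓝 0) := by
    simpa using tendsto_gaussQ_atTop.add tendsto_mul_stdNormalPdf_atTop
  have hmono := antitone_of_hasDerivAt_nonpos hasDerivAt_gaussQ_add_mul_stdNormalPdf fun y =>
    neg_nonpos.2 (mul_nonneg (sq_nonneg y) (stdNormalPdf_pos y).le)
  exact hmono.le_of_tendsto hlim x

lemma mul_stdNormalPdf_le_one_add_sq_mul_gaussQ (x : ℝ) :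
    x * stdNormalPdf x ≤ (1 + x ^ 2) * gaussQ x := by
  have hderiv (y : ℝ) : HasDerivAt (fun y => (1 + y ^ 2) * gaussQ y - y * stdNormalPdf y)
      (2 * (y * gaussQ y - stdNormalPdf y)) y :=
    ((((hasDerivAt_pow 2 y).const_add 1).mul (hasDerivAt_gaussQ y)).sub
      (hasDerivAt_mul_stdNormalPdf y)).congr_deriv (by ring)
  have hlim : Tendsto (fun y => (1 + y ^ 2) * gaussQ y - y * stdNormalPdf y) atTop (𝓝 0) := by
    have h := (tendsto_gaussQ_atTop.add tendsto_sq_mul_gaussQ_atTop).sub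
      tendsto_mul_stdNormalPdf_atTop
    simp only [add_zero, sub_zero] at h
    exact h.congr fun y => by ring
  have hmono := antitone_of_hasDerivAt_nonpos hderiv fun y => by
    simp only [Pi.zero_apply]; linarith [mul_gaussQ_le_stdNormalPdf y]
  linarith [hmono.le_of_tendsto hlim x]

lemma stdNormalPdf_sq_le_gaussQ_mul (x : ℝ) :
    stdNormalPdf x ^ 2 ≤ gaussQ x * (gaussQ x + x * stdNormalPdf x) := by
  have hderiv (y : ℝ) :
      HasDerivAt (fun y => gaussQ y * (gaussQ y + y * stdNormalPdf y) - stdNormalPdf y ^ 2)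
        (-stdNormalPdf y * ((1 + y ^ 2) * gaussQ y - y * stdNormalPdf y)) y :=
    (((hasDerivAt_gaussQ y).mul (hasDerivAt_gaussQ_add_mul_stdNormalPdf y)).sub
      ((hasDerivAt_stdNormalPdf y).pow 2)).congr_deriv (by ring)
  have hlim : Tendsto (fun y => gaussQ y * (gaussQ y + y * stdNormalPdf y) - stdNormalPdf y ^ 2)
      atTop (𝓝 0) := by
    simpa using (tendsto_gaussQ_atTop.mul
      (tendsto_gaussQ_atTop.add tendsto_mul_stdNormalPdf_atTop)).sub
      (tendsto_stdNormalPdf_atTop.pow 2)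
  have hmono := antitone_of_hasDerivAt_nonpos hderiv fun y =>
    mul_nonpos_of_nonpos_of_nonneg (neg_nonpos.2 (stdNormalPdf_pos y).le)
      (sub_nonneg.2 (mul_stdNormalPdf_le_one_add_sq_mul_gaussQ y))
  linarith [hmono.le_of_tendsto hlim x]

lemma gaussPhi_sub_mul_stdNormalPdf_nonneg (x : ℝ) : 0 ≤ gaussPhi x - x * stdNormalPdf x := by
  simpa [gaussQ_neg, stdNormalPdf_neg, sub_eq_add_neg] using
    gaussQ_add_mul_stdNormalPdf_nonneg (-x)

lemma stdNormalPdf_sq_le_gaussPhi_mul (x : ℝ) :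
    stdNormalPdf x ^ 2 ≤ gaussPhi x * (gaussPhi x - x * stdNormalPdf x) := by
  simpa [gaussQ_neg, stdNormalPdf_neg, sub_eq_add_neg] using stdNormalPdf_sq_le_gaussQ_mul (-x)

theorem stmt9 (x₁ x₂ : ℝ) :
    (x₁ * stdNormalPdf x₁ - x₂ * stdNormalPdf x₂) * (gaussQ x₁ + gaussPhi x₂)
      + (gaussQ x₁ + gaussPhi x₂) ^ 2
      - (stdNormalPdf x₁ - stdNormalPdf x₂) ^ 2 > 0 := by
  have hQ := gaussQ_nonneg x₁
  have hPhi := gaussPhi_nonneg x₂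
  have hu := gaussQ_add_mul_stdNormalPdf_nonneg x₁
  have hv := gaussPhi_sub_mul_stdNormalPdf_nonneg x₂
  have hpq := mul_pos (stdNormalPdf_pos x₁) (stdNormalPdf_pos x₂)
  linear_combination stdNormalPdf_sq_le_gaussQ_mul x₁ + stdNormalPdf_sq_le_gaussPhi_mul x₂
    + mul_nonneg hQ hv + mul_nonneg hPhi hu + 2 * hpq
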